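/- Let λ be an uncountable regular cardinal with λ^{<λ} = λ, let A ⊆ λ^2 and let t ∈ 2^{<λ}. Then: (1) player I has a winning strategy in the perfect set game F^t_λ(A) if and only if A ∩ N_t has a perfect subset; (2) player II has a winning strategy in F^t_λ(A) if and only if |A ∩ N_t| ≤ λ. -/

import Mathlib

universe u

noncomputable section

/-! ## Sequences of ordinals

`SeqLT o v` is the set `v^{<o}` of all sequences of ordinals `< v` of length `< o`
(for `o > 0`; values beyond the length are normalized to `0`).
`SeqFull o v` is the generalized Baire space `v^o` of all functions from ordinals `< o`
to ordinals `< v`. -/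

/-- An element of `v^{<o}`: a sequence of ordinals `< v` of length `< o`. -/
structure SeqLT (o v : Ordinal.{u}) : Type (u + 1) where
  len : Ordinal.{u}
  len_lt : len < o ⊔ 1
  val : Ordinal.{u} → Ordinal.{u}
  val_lt : ∀ β, β < len → val β < v
  val_zero : ∀ β, len ≤ β → val β = 0

namespace SeqLT

variable {o v : Ordinal.{u}}

/-- `s ⊆ t`, i.e. `t` end-extends `s`. -/
protected def le (s t : SeqLT o v) : Prop :=
  s.len ≤ t.len ∧ ∀ β, β < s.len → s.val β = t.val β

/-- `s ⊊ t`, i.e. `t` properly end-extends `s`. -/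
protected def slt (s t : SeqLT o v) : Prop :=
  s.le t ∧ s.len < t.len

/-- The empty sequence. -/
protected def empty (o v : Ordinal.{u}) : SeqLT o v where
  len := 0
  len_lt := lt_sup_iff.mpr (Or.inr zero_lt_one)
  val := fun _ => 0
  val_lt := fun β h => absurd h (not_lt_of_ge zero_le)
  val_zero := fun _ _ => rfl

/-- `s⌢⟨β⟩`: the sequence `s` extended by the single value `β`. -/
def snoc (s : SeqLT o v) (β : Ordinal.{u}) : SeqLT o v :=
  if h : s.len + 1 < o ⊔ 1 ∧ β < v then
    { len := s.len + 1
      len_lt := h.1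
      val := fun γ => if γ = s.len then β else s.val γ
      val_lt := fun γ hγ => by
        rcases eq_or_ne γ s.len with rfl | hne
        · simpa using h.2
        · simp only [if_neg hne]
          refine s.val_lt γ (lt_of_le_of_ne ?_ hne)
          rw [Ordinal.add_one_eq_succ] at hγ
          exact Order.lt_succ_iff.mp hγ
      val_zero := fun γ hγ => by
        have h1 : s.len < γ :=
          lt_of_lt_of_le (by rw [Ordinal.add_one_eq_succ]; exact Order.lt_succ s.len) hγ
        simp only [if_neg h1.ne']
        exact s.val_zero γ h1.le }
  else s

protected theorem le_refl (s : SeqLT o v) : s.le s :=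
  ⟨le_rfl, fun _ _ => rfl⟩

protected theorem le_trans {s t u : SeqLT o v} (h1 : s.le t) (h2 : t.le u) : s.le u :=
  ⟨h1.1.trans h2.1, fun β hβ => (h1.2 β hβ).trans (h2.2 β (lt_of_lt_of_le hβ h1.1))⟩

end SeqLT

/-- An element of the generalized Baire space `v^o`. -/
structure SeqFull (o v : Ordinal.{u}) : Type (u + 1) where
  val : Ordinal.{u} → Ordinal.{u}
  val_lt : ∀ β, β < o → val β < v
  val_zero : ∀ β, o ≤ β → val β = 0

/-- The restriction `x ↾ β` of `x : v^o` to an ordinal `β < o`. -/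
def SeqFull.res {o v : Ordinal.{u}} (x : SeqFull o v) (β : Ordinal.{u}) : SeqLT o v :=
  if h : β < o ⊔ 1 then
    { len := β
      len_lt := h
      val := fun γ => if γ < β then x.val γ else 0
      val_lt := fun γ hγ => by
        simp only [if_pos hγ]
        rcases lt_sup_iff.mp h with h' | h'
        · exact x.val_lt γ (hγ.trans h')
        · rw [Ordinal.lt_one_iff_zero] at h'
          exact absurd (h' ▸ hγ) (not_lt_of_ge zero_le)
      val_zero := fun γ hγ => if_neg (not_lt.mpr hγ) }
  else SeqLT.empty o v

/-- `s ⊆ x`: the sequence `s` is an initial segment of `x : v^o`. -/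
def SeqLT.prefixOf {o v : Ordinal.{u}} (s : SeqLT o v) (x : SeqFull o v) : Prop :=
  ∀ β, β < s.len → s.val β = x.val β

/-! ## The bounded topology -/

/-- The basic open set `N_t`. -/
def basicOpen {o v : Ordinal.{u}} (t : SeqLT o v) : Set (SeqFull o v) :=
  {x | t.prefixOf x}

/-- The bounded (standard) topology on the generalized Baire space, generated by the
basic open sets `N_t`. -/
instance (o v : Ordinal.{u}) : TopologicalSpace (SeqFull o v) :=
  TopologicalSpace.generateFrom {U | ∃ t : SeqLT o v, U = basicOpen t}

/-- `A` is a nowhere dense subset of `B` (in the subspace topology on `B`). -/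
def NowhereDenseIn {o v : Ordinal.{u}} (A B : Set (SeqFull o v)) : Prop :=
  A ⊆ B ∧ interior (closure {x : ↥B | (x : SeqFull o v) ∈ A}) = ∅

/-- `A` is `o`-meager in `B`: `A ∩ B` is the union of (card of) `o` many nowhere dense
subsets of `B`. -/
def MeagerIn {o v : Ordinal.{u}} (A B : Set (SeqFull o v)) : Prop :=
  ∃ F : {β : Ordinal.{u} // β < o} → Set (SeqFull o v),
    (∀ i, NowhereDenseIn (F i) B) ∧ A ∩ B = ⋃ i, F i

/-- `A` is comeager in `B`: `B \ A` is meager in `B`. -/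
def ComeagerIn {o v : Ordinal.{u}} (A B : Set (SeqFull o v)) : Prop :=
  MeagerIn (B \ A) B

/-- `A` has the `o`-Baire property: for some open `U`, `A △ U` is meager. -/
def BaireSet {o v : Ordinal.{u}} (A : Set (SeqFull o v)) : Prop :=
  ∃ U : Set (SeqFull o v), IsOpen U ∧ MeagerIn (symmDiff A U) Set.univ

/-! ## Homomorphisms of `v^{<o}` -/

/-- A homomorphism: strictly extension-preserving map of `v^{<o}` to itself. -/
def IsHom {o v : Ordinal.{u}} (f : SeqLT o v → SeqLT o v) : Prop :=
  ∀ s t : SeqLT o v, s.slt t → (f s).slt (f t)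

/-- `f` is dense: for every `s` and every `t ⊇ f(s)` there is `β < v` with
`f(s⌢⟨β⟩) ⊇ t`. -/
def IsDenseMap {o v : Ordinal.{u}} (f : SeqLT o v → SeqLT o v) : Prop :=
  ∀ s t : SeqLT o v, (f s).le t → ∃ β, β < v ∧ t.le (f (s.snoc β))

/-- `u = ⋃_{α<γ} s α` for a chain `s`. -/
def IsUnionOfChain {o v : Ordinal.{u}} (u : SeqLT o v) (γ : Ordinal.{u})
    (s : Ordinal.{u} → SeqLT o v) : Prop :=
  (∀ α, α < γ → (s α).le u) ∧ ∀ β, β < u.len → ∃ α, α < γ ∧ β < (s α).len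

/-- `f` is continuous: for every limit `γ < o` and every strictly increasing sequence
`⟨s_α : α < γ⟩`, `f(⋃_{α<γ} s_α) = ⋃_{α<γ} f(s_α)`. -/
def IsContinuousMap {o v : Ordinal.{u}} (f : SeqLT o v → SeqLT o v) : Prop :=
  ∀ γ : Ordinal.{u}, Order.IsSuccLimit γ → γ < o →
    ∀ s : Ordinal.{u} → SeqLT o v, (∀ α β, α < β → β < γ → (s α).slt (s β)) →
      ∀ u : SeqLT o v, IsUnionOfChain u γ s → IsUnionOfChain (f u) γ fun α => f (s α)

/-- `y = f*(x) = ⋃_{α<o} f(x↾α)` for a homomorphism `f`. -/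
def FStarVal {o v : Ordinal.{u}} (f : SeqLT o v → SeqLT o v) (x y : SeqFull o v) : Prop :=
  (∀ α, α < o → (f (x.res α)).prefixOf y) ∧
    ∀ β, β < o → ∃ α, α < o ∧ β < (f (x.res α)).len

/-! ## Clubs and the almost Baire property -/

/-- `C` is a club (closed unbounded set) in the ordinal `o`. -/
def IsClubIn (C : Set Ordinal.{u}) (o : Ordinal.{u}) : Prop :=
  (∀ γ ∈ C, γ < o) ∧ (∀ β, β < o → ∃ γ ∈ C, β ≤ γ) ∧
    ∀ β, β < o → 0 < β → (∀ γ, γ < β → ∃ ξ ∈ C, γ < ξ ∧ ξ < β) → β ∈ C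

/-- The set of functions coding elements of the club filter as characteristic functions. -/
def ClSet (o v : Ordinal.{u}) : Set (SeqFull o v) :=
  {x | ∃ C : Set Ordinal.{u}, IsClubIn C o ∧ ∀ i ∈ C, x.val i ≠ 0}

/-- The set of functions coding elements of the nonstationary ideal. -/
def NsSet (o v : Ordinal.{u}) : Set (SeqFull o v) :=
  {x | ∃ C : Set Ordinal.{u}, IsClubIn C o ∧ ∀ i ∈ C, x.val i = 0}

/-- `A` is almost Baire: there is a dense homomorphism `f` with `ran f* ⊆ A`, or a dense
continuous homomorphism `f` with `f ∅ = ∅` and `ran f* ⊆ Aᶜ`. -/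
def AlmostBaire {o v : Ordinal.{u}} (A : Set (SeqFull o v)) : Prop :=
  ∃ f : SeqLT o v → SeqLT o v, IsHom f ∧ IsDenseMap f ∧
    ((∀ x y, FStarVal f x y → y ∈ A) ∨
      ((∀ x y, FStarVal f x y → y ∉ A) ∧ IsContinuousMap f ∧
        f (SeqLT.empty o v) = SeqLT.empty o v))

/-! ## Banach–Mazur games of length `o`

A run of the game is a strictly increasing sequence `⟨s_α : α < o⟩` in `v^{<o}`;
player I plays at even positions (`0` and limits count as even), player II at odd ones.
In the game `G^t` the first move of player I must extend `t`; taking `t = ∅` gives the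
plain Banach–Mazur game. -/

/-- `γ` is an even ordinal (`0` and limits are even). -/
def EvenOrd (γ : Ordinal.{u}) : Prop := ∃ δ : Ordinal.{u}, γ = 2 * δ

/-- `γ` is an odd ordinal. -/
def OddOrd (γ : Ordinal.{u}) : Prop := ∃ δ : Ordinal.{u}, γ = 2 * δ + 1

/-- The moves of a (partial) run, as a function on ordinals. -/
abbrev Play (o v : Ordinal.{u}) := Ordinal.{u} → SeqLT o v

/-- A strategy: given the length of the current position and the moves so far,
produce the next move. -/
abbrev Strat (o v : Ordinal.{u}) := Ordinal.{u} → Play o v → SeqLT o v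

/-- `p` is a legal partial run of length `γ` of the game `G^t`: strictly increasing moves,
the first move extends `t`, and the moves beyond `γ` are normalized to `∅`. -/
def IsPos {o v : Ordinal.{u}} (t : SeqLT o v) (p : Play o v) (γ : Ordinal.{u}) : Prop :=
  (∀ α β, α < β → β < γ → (p α).slt (p β)) ∧ (0 < γ → t.le (p 0)) ∧
    ∀ α, γ ≤ α → p α = SeqLT.empty o v

/-- The restriction of a run to its first `γ` moves. -/
def resPlay {o v : Ordinal.{u}} (p : Play o v) (γ : Ordinal.{u}) : Play o v :=
  fun α => if α < γ then p α else SeqLT.empty o v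

/-- `m` is a legal move at the position `p` of length `γ` in the game `G^t`. -/
def MoveOK {o v : Ordinal.{u}} (t : SeqLT o v) (p : Play o v) (γ : Ordinal.{u})
    (m : SeqLT o v) : Prop :=
  (∀ α, α < γ → (p α).slt m) ∧ (γ = 0 → t.le m)

/-- `σ` is a strategy for player I in `G^t`: it assigns a legal move to every legal
position of even length. -/
def LegalI {o v : Ordinal.{u}} (t : SeqLT o v) (σ : Strat o v) : Prop :=
  ∀ γ, γ < o → EvenOrd γ → ∀ p, IsPos t p γ → MoveOK t p γ (σ γ p)

/-- `σ` is a strategy for player II in `G^t`: it assigns a legal move to every legal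
position of odd length. -/
def LegalII {o v : Ordinal.{u}} (t : SeqLT o v) (σ : Strat o v) : Prop :=
  ∀ γ, γ < o → OddOrd γ → ∀ p, IsPos t p γ → MoveOK t p γ (σ γ p)

/-- The first `γ` moves of `p` follow the strategy `σ` of player I. -/
def FollowsI {o v : Ordinal.{u}} (σ : Strat o v) (p : Play o v) (γ : Ordinal.{u}) : Prop :=
  ∀ α, α < γ → EvenOrd α → p α = σ α (resPlay p α)

/-- The first `γ` moves of `p` follow the strategy `σ` of player II. -/
def FollowsII {o v : Ordinal.{u}} (σ : Strat o v) (p : Play o v) (γ : Ordinal.{u}) : Prop :=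
  ∀ α, α < γ → OddOrd α → p α = σ α (resPlay p α)

/-- `x = ⋃_{α<o} p α` is the outcome of the complete run `p`. -/
def IsOutcome {o v : Ordinal.{u}} (p : Play o v) (x : SeqFull o v) : Prop :=
  (∀ α, α < o → (p α).prefixOf x) ∧ ∀ β, β < o → ∃ α, α < o ∧ β < (p α).len

/-- Player I has a winning strategy in the Banach–Mazur game `G^t(A)` of length `o`. -/
def WinIStrat {o v : Ordinal.{u}} (t : SeqLT o v) (A : Set (SeqFull o v)) : Prop :=
  ∃ σ : Strat o v, LegalI t σ ∧
    ∀ p : Play o v, IsPos t p o → FollowsI σ p o → ∃ x, IsOutcome p x ∧ x ∈ A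

/-- Player II has a winning strategy in the Banach–Mazur game `G^t(A)` of length `o`. -/
def WinIIStrat {o v : Ordinal.{u}} (t : SeqLT o v) (A : Set (SeqFull o v)) : Prop :=
  ∃ σ : Strat o v, LegalII t σ ∧
    ∀ p : Play o v, IsPos t p o → FollowsII σ p o → ∃ x, IsOutcome p x ∧ x ∉ A

/-- `σ` is a tactic for player II: its moves depend only on the union of the previous moves. -/
def IsTacticII {o v : Ordinal.{u}} (t : SeqLT o v) (σ : Strat o v) : Prop :=
  ∃ f : SeqLT o v → SeqLT o v, ∀ γ, γ < o → OddOrd γ → ∀ p, IsPos t p γ →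
    ∀ u, IsUnionOfChain u γ p → σ γ p = f u

/-- Player II has a winning tactic in the Banach–Mazur game `G^t(A)` of length `o`. -/
def WinIITactic {o v : Ordinal.{u}} (t : SeqLT o v) (A : Set (SeqFull o v)) : Prop :=
  ∃ σ : Strat o v, LegalII t σ ∧ IsTacticII t σ ∧
    ∀ p : Play o v, IsPos t p o → FollowsII σ p o → ∃ x, IsOutcome p x ∧ x ∉ A

/-! ## Trees and perfect sets -/

/-- A subtree of `v^{<o}`: a downwards closed set of sequences. -/
def IsSubtree {o v : Ordinal.{u}} (T : Set (SeqLT o v)) : Prop :=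
  ∀ s ∈ T, ∀ r : SeqLT o v, r.le s → r ∈ T

/-- `T` is closed: every strictly increasing sequence in `T` of length `< o` has an
upper bound in `T`. -/
def TreeClosed {o v : Ordinal.{u}} (T : Set (SeqLT o v)) : Prop :=
  ∀ γ : Ordinal.{u}, γ < o → ∀ s : Ordinal.{u} → SeqLT o v,
    (∀ α β, α < β → β < γ → (s α).slt (s β)) → (∀ α, α < γ → s α ∈ T) →
      ∃ b ∈ T, ∀ α, α < γ → (s α).le b

/-- `t` is a direct successor of `s`. -/
def IsDirectSucc {o v : Ordinal.{u}} (s t : SeqLT o v) : Prop :=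
  s.slt t ∧ t.len = s.len + 1

/-- `T` is a perfect tree: a (nonempty) closed subtree whose splitting nodes are cofinal. -/
def IsPerfectTree {o v : Ordinal.{u}} (T : Set (SeqLT o v)) : Prop :=
  T.Nonempty ∧ IsSubtree T ∧ TreeClosed T ∧
    ∀ s ∈ T, ∃ t ∈ T, s.le t ∧
      ∃ t₁ ∈ T, ∃ t₂ ∈ T, IsDirectSucc t t₁ ∧ IsDirectSucc t t₂ ∧ t₁ ≠ t₂

/-- The body `[T]` of a tree `T`: the set of branches of length `o` through `T`. -/
def treeBody {o v : Ordinal.{u}} (T : Set (SeqLT o v)) : Set (SeqFull o v) :=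
  {x | ∀ α, α < o → x.res α ∈ T}

/-- `p` is a legal partial run of length `γ` of the perfect set game `F^t`: strictly
increasing binary sequences, the first move extends `t`, after each even round `α` the
move of player II has length `dom (p α) + 1`, and moves beyond `γ` are normalized. -/
def IsPosF {o : Ordinal.{u}} (t : SeqLT o 2) (p : Play o 2) (γ : Ordinal.{u}) : Prop :=
  (∀ α β, α < β → β < γ → (p α).slt (p β)) ∧ (0 < γ → t.le (p 0)) ∧
    (∀ α, EvenOrd α → α + 1 < γ → (p (α + 1)).len = (p α).len + 1) ∧
    ∀ α, γ ≤ α → p α = SeqLT.empty o 2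

/-- `m` is a legal move for player II at the position `p` of odd length `γ` in the perfect
set game: it strictly extends all previous moves and has length `dom (p δ) + 1` where
`γ = δ + 1`. -/
def MoveOKFII {o : Ordinal.{u}} (p : Play o 2) (γ : Ordinal.{u}) (m : SeqLT o 2) : Prop :=
  (∀ α, α < γ → (p α).slt m) ∧ ∀ δ, γ = δ + 1 → m.len = (p δ).len + 1

/-- `σ` is a strategy for player I in the perfect set game `F^t`. -/
def LegalFI {o : Ordinal.{u}} (t : SeqLT o 2) (σ : Strat o 2) : Prop :=
  ∀ γ, γ < o → EvenOrd γ → ∀ p, IsPosF t p γ → MoveOK t p γ (σ γ p)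

/-- `σ` is a strategy for player II in the perfect set game `F^t`. -/
def LegalFII {o : Ordinal.{u}} (t : SeqLT o 2) (σ : Strat o 2) : Prop :=
  ∀ γ, γ < o → OddOrd γ → ∀ p, IsPosF t p γ → MoveOKFII p γ (σ γ p)

/-- Player I has a winning strategy in the perfect set game `F^t(A)` of length `o`. -/
def WinFIStrat {o : Ordinal.{u}} (t : SeqLT o 2) (A : Set (SeqFull o 2)) : Prop :=
  ∃ σ : Strat o 2, LegalFI t σ ∧
    ∀ p : Play o 2, IsPosF t p o → FollowsI σ p o → ∃ x, IsOutcome p x ∧ x ∈ A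

/-- Player II has a winning strategy in the perfect set game `F^t(A)` of length `o`. -/
def WinFIIStrat {o : Ordinal.{u}} (t : SeqLT o 2) (A : Set (SeqFull o 2)) : Prop :=
  ∃ σ : Strat o 2, LegalFII t σ ∧
    ∀ p : Play o 2, IsPosF t p o → FollowsII σ p o → ∃ x, IsOutcome p x ∧ x ∉ A


/-!
The perfect set game is analysed through two constructions on strategies.

If player I wins `F^t(A)` with `σ`, the tree of all initial segments of moves of `σ`-runs
in which player II simply copies the bits of some `x ∈ λ^2` is perfect: its nodes are
determined by the bits copied so far, player II's choice of bit splits it, and closedness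
holds because any node of the tree is already met by the run copying an extension of it.
A branch `y` of this tree is the outcome of the run in which II copies `y`, so `y ∈ A`.

If player II wins with `σ`, player I can try to "chase" a given `x ∈ A ∩ N_t`: at each of
his turns he plays the shortest initial segment of `x` to which `σ` answers with another
initial segment of `x`. As `σ` wins, the chase gets stuck at some stage, after the moves
have reached a length `ℓ < λ`. The map `x ↦ x ↾ (ℓ + 1)` is injective: two points with the
same image are chased identically up to the common stuck stage, and at their first
difference `α > ℓ` player I could play `x ↾ α`, to which `σ` answers along one of them.
Hence `|A ∩ N_t| ≤ |2^{<λ}| = λ^{<λ} = λ`. The converse directions are the familiar ones: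
player I plays splitting nodes of a perfect tree, and player II diagonalises against an
enumeration of `A ∩ N_t` in order type `λ`.
-/


theorem Ordinal.eq_zero_or_eq_one_of_lt_two {m : Ordinal.{u}} (h : m < 2) : m = 0 ∨ m = 1 := by
  rwa [show (2 : Ordinal) = 1 + 1 by norm_num, Order.lt_add_one_iff, Order.le_one_iff] at h

theorem Ordinal.eq_or_eq_of_lt_two {a b c : Ordinal.{u}} (ha : a < 2) (hb : b < 2) (hc : c < 2)
    (hbc : b ≠ c) : a = b ∨ a = c := by
  rcases eq_zero_or_eq_one_of_lt_two ha with rfl | rfl <;>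
    rcases eq_zero_or_eq_one_of_lt_two hb with rfl | rfl <;>
    rcases eq_zero_or_eq_one_of_lt_two hc with rfl | rfl <;> simp_all

theorem Ordinal.one_sub_ne_self {b : Ordinal.{u}} (hb : b < 2) : 1 - b ≠ b := by
  rcases Ordinal.eq_zero_or_eq_one_of_lt_two hb with rfl | rfl <;> simp

theorem Ordinal.one_sub_lt_two (b : Ordinal.{u}) : 1 - b < 2 :=
  (Ordinal.sub_le_self 1 b).trans_lt one_lt_two

namespace SeqLT

variable {o v : Ordinal.{u}}

instance : Inhabited (SeqLT o v) := ⟨SeqLT.empty o v⟩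

protected theorem ext {s t : SeqLT o v} (hlen : s.len = t.len)
    (hval : ∀ β < s.len, s.val β = t.val β) : s = t := by
  have hfun : s.val = t.val := funext fun β =>
    (lt_or_ge β s.len).elim (hval β) fun h => (s.val_zero β h).trans (t.val_zero β (hlen ▸ h)).symm
  cases s; cases t
  simp_all

protected theorem le_antisymm {s t : SeqLT o v} (h₁ : s.le t) (h₂ : t.le s) : s = t :=
  SeqLT.ext (le_antisymm h₁.1 h₂.1) h₁.2

protected theorem slt_of_le_of_slt {s t w : SeqLT o v} (h₁ : s.le t) (h₂ : t.slt w) :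
    s.slt w :=
  ⟨SeqLT.le_trans h₁ h₂.1, h₁.1.trans_lt h₂.2⟩

protected theorem slt_of_slt_of_le {s t w : SeqLT o v} (h₁ : s.slt t) (h₂ : t.le w) :
    s.slt w :=
  ⟨SeqLT.le_trans h₁.1 h₂, h₁.2.trans_le h₂.1⟩

theorem le_of_le_of_le {s t w : SeqLT o v} (hs : s.le w) (ht : t.le w) (hlen : s.len ≤ t.len) :
    s.le t :=
  ⟨hlen, fun β hβ => (hs.2 β hβ).trans (ht.2 β (hβ.trans_le hlen)).symm⟩

theorem eq_of_le_of_le {s t w : SeqLT o v} (hs : s.le w) (ht : t.le w) (hlen : s.len = t.len) :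
    s = t :=
  SeqLT.le_antisymm (le_of_le_of_le hs ht hlen.le) (le_of_le_of_le ht hs hlen.ge)

theorem len_lt_of_isSuccLimit (ho : Order.IsSuccLimit o) (s : SeqLT o v) : s.len < o :=
  s.len_lt.trans_eq (sup_eq_left.2 (Ordinal.one_lt_of_isSuccLimit ho).le)

theorem len_add_one_lt (ho : Order.IsSuccLimit o) (s : SeqLT o v) : s.len + 1 < o ⊔ 1 :=
  lt_sup_of_lt_left (ho.add_one_lt (len_lt_of_isSuccLimit ho s))

section snoc

variable {s : SeqLT o v} {β : Ordinal.{u}}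

theorem snoc_len (ho : Order.IsSuccLimit o) (hβ : β < v) : (s.snoc β).len = s.len + 1 := by
  rw [snoc, dif_pos ⟨len_add_one_lt ho s, hβ⟩]

theorem snoc_val_len (ho : Order.IsSuccLimit o) (hβ : β < v) : (s.snoc β).val s.len = β := by
  rw [snoc, dif_pos ⟨len_add_one_lt ho s, hβ⟩]
  simp

theorem snoc_val_of_lt (ho : Order.IsSuccLimit o) (hβ : β < v) {γ : Ordinal.{u}}
    (hγ : γ < s.len) : (s.snoc β).val γ = s.val γ := by
  rw [snoc, dif_pos ⟨len_add_one_lt ho s, hβ⟩]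
  simp [hγ.ne]

theorem isDirectSucc_snoc (ho : Order.IsSuccLimit o) (hβ : β < v) : IsDirectSucc s (s.snoc β) :=
  ⟨⟨⟨by rw [snoc_len ho hβ]; exact (lt_add_one _).le, fun _ hγ => (snoc_val_of_lt ho hβ hγ).symm⟩,
    by rw [snoc_len ho hβ]; exact lt_add_one _⟩, snoc_len ho hβ⟩

end snoc

end SeqLT

theorem IsDirectSucc.eq_snoc {o v : Ordinal.{u}} {s m : SeqLT o v} (ho : Order.IsSuccLimit o)
    (h : IsDirectSucc s m) : m = s.snoc (m.val s.len) := by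
  have hlast : m.val s.len < v := m.val_lt _ (by rw [h.2]; exact lt_add_one _)
  refine SeqLT.ext (by rw [h.2, SeqLT.snoc_len ho hlast]) fun γ hγ => ?_
  rcases (Order.lt_add_one_iff.1 (h.2 ▸ hγ)).lt_or_eq with hlt | rfl
  · rw [SeqLT.snoc_val_of_lt ho hlast hlt, h.1.1.2 γ hlt]
  · rw [SeqLT.snoc_val_len ho hlast]

namespace SeqFull

instance {o : Ordinal.{u}} : Inhabited (SeqFull o 2) :=
  ⟨⟨fun _ => 0, fun _ _ => two_pos, fun _ _ => rfl⟩⟩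

variable {o v : Ordinal.{u}} {x x' : SeqFull o v}

protected theorem ext (h : ∀ β < o, x.val β = x'.val β) : x = x' := by
  have hfun : x.val = x'.val := funext fun β =>
    (lt_or_ge β o).elim (h β) fun hβ => (x.val_zero β hβ).trans (x'.val_zero β hβ).symm
  cases x; cases x'
  simp_all

theorem exists_first_ne (h : x ≠ x') :
    ∃ α < o, (∀ γ < α, x.val γ = x'.val γ) ∧ x.val α ≠ x'.val α := by
  have hne : {γ | x.val γ ≠ x'.val γ}.Nonempty := by
    by_contra hempty
    exact h (SeqFull.ext fun β _ => not_not.1 fun hβ => hempty ⟨β, hβ⟩)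
  obtain ⟨α, hα, hmin⟩ := WellFounded.has_min wellFounded_lt _ hne
  refine ⟨α, lt_of_not_ge fun hαo => hα ?_, fun γ hγ => not_not.1 fun hne => hmin γ hne hγ, hα⟩
  rw [x.val_zero α hαo, x'.val_zero α hαo]

variable {β γ : Ordinal.{u}}

theorem res_len (hβ : β < o) : (x.res β).len = β := by
  rw [res, dif_pos (lt_sup_of_lt_left hβ)]

theorem res_val (hβ : β < o) (hγ : γ < β) : (x.res β).val γ = x.val γ := by
  rw [res, dif_pos (lt_sup_of_lt_left hβ)]
  simp [hγ]

theorem res_prefixOf (x : SeqFull o v) (β : Ordinal.{u}) : (x.res β).prefixOf x := by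
  intro γ hγ
  by_cases hβ : β < o ⊔ 1
  · rw [res, dif_pos hβ] at hγ ⊢
    exact if_pos hγ
  · rw [res, dif_neg hβ] at hγ
    exact absurd hγ not_lt_zero

theorem le_res {s : SeqLT o v} (hs : s.prefixOf x) (hβ : β < o) (hlen : s.len ≤ β) :
    s.le (x.res β) :=
  ⟨(res_len hβ).symm ▸ hlen, fun γ hγ => by rw [res_val hβ (hγ.trans_le hlen), hs γ hγ]⟩

theorem res_le {s : SeqLT o v} (hs : s.prefixOf x) (hβ : β < o) (hlen : β ≤ s.len) :
    (x.res β).le s :=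
  ⟨(res_len hβ).trans_le hlen, fun γ hγ => by
    rw [res_len hβ] at hγ
    rw [res_val hβ hγ, hs γ (hγ.trans_le hlen)]⟩

theorem res_congr (h : ∀ γ < β, x.val γ = x'.val γ) : x.res β = x'.res β := by
  by_cases hβ : β < o ⊔ 1
  · refine SeqLT.ext (by rw [res, dif_pos hβ, res, dif_pos hβ]) fun γ hγ => ?_
    rw [res, dif_pos hβ] at hγ ⊢
    rw [res, dif_pos hβ]
    simp only [if_pos hγ]
    exact h γ hγ
  · rw [res, dif_neg hβ, res, dif_neg hβ]

theorem val_eq_of_res_eq (h : x.res β = x'.res β) (hβ : β < o) (hγ : γ < β) :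
    x.val γ = x'.val γ := by
  rw [← res_val hβ hγ, h, res_val hβ hγ]

end SeqFull

theorem SeqLT.prefixOf.of_le {o v : Ordinal.{u}} {s m : SeqLT o v} {x : SeqFull o v}
    (h : s.le m) (hm : m.prefixOf x) : s.prefixOf x :=
  fun γ hγ => (h.2 γ hγ).trans (hm γ (hγ.trans_le h.1))

theorem IsDirectSucc.prefixOf_iff {o v : Ordinal.{u}} {s m : SeqLT o v} {x : SeqFull o v}
    (h : IsDirectSucc s m) (hs : s.prefixOf x) : m.prefixOf x ↔ m.val s.len = x.val s.len := by
  refine ⟨fun hm => hm _ (h.1.2), fun hbit γ hγ => ?_⟩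
  rcases (Order.lt_add_one_iff.1 (h.2 ▸ hγ)).lt_or_eq with hlt | rfl
  · rw [← h.1.1.2 γ hlt, hs γ hlt]
  · exact hbit

theorem evenOrd_or_oddOrd (γ : Ordinal.{u}) : EvenOrd γ ∨ OddOrd γ := by
  rcases Ordinal.eq_zero_or_eq_one_of_lt_two (Ordinal.mod_lt γ two_ne_zero) with h | h
  · exact Or.inl ⟨γ / 2, by rw [← Ordinal.div_add_mod γ 2, h, add_zero]; simp⟩
  · exact Or.inr ⟨γ / 2, by rw [← h]; exact (Ordinal.div_add_mod γ 2).symm⟩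

theorem EvenOrd.not_oddOrd {γ : Ordinal.{u}} (he : EvenOrd γ) : ¬OddOrd γ := by
  rintro ⟨e, rfl⟩
  obtain ⟨d, hd⟩ := he
  have := congrArg (· % 2) hd
  simp only [Ordinal.mul_add_mod_self, Ordinal.mod_eq_of_lt one_lt_two] at this
  simp at this

theorem evenOrd_zero : EvenOrd (0 : Ordinal.{u}) := ⟨0, (mul_zero 2).symm⟩

theorem EvenOrd.add_one {γ : Ordinal.{u}} (h : EvenOrd γ) : OddOrd (γ + 1) := by
  obtain ⟨d, rfl⟩ := h
  exact ⟨d, rfl⟩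

theorem OddOrd.add_one {γ : Ordinal.{u}} (h : OddOrd γ) : EvenOrd (γ + 1) := by
  obtain ⟨d, rfl⟩ := h
  exact ⟨d + 1, by rw [mul_add, mul_one, add_assoc, one_add_one_eq_two]⟩

theorem OddOrd.exists_eq_add_one {γ : Ordinal.{u}} (h : OddOrd γ) :
    ∃ δ, EvenOrd δ ∧ γ = δ + 1 := by
  obtain ⟨d, rfl⟩ := h
  exact ⟨2 * d, ⟨d, rfl⟩, rfl⟩

/-- The properties of `λ.ord`, for a regular cardinal `λ`, on which the games rely. -/
structure IsGameLength (o : Ordinal.{u}) : Prop where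
  isSuccLimit : Order.IsSuccLimit o
  exists_bound : ∀ γ < o, ∀ f : Ordinal.{u} → Ordinal.{u}, (∀ α < γ, f α < o) →
    ∃ b < o, ∀ α < γ, f α ≤ b
  two_mul_add_one_lt : ∀ δ < o, 2 * δ + 1 < o

theorem isGameLength_ord {l : Cardinal.{u}} (hl : l.IsRegular) : IsGameLength l.ord where
  isSuccLimit := Cardinal.isSuccLimit_ord hl.aleph0_le
  exists_bound γ hγ f hf := by
    have hcard : Cardinal.mk (f '' Set.Iio γ) < (Ordinal.lift.{u + 1} l.ord).cof := by
      rw [← Ordinal.lift_cof, hl.cof_ord]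
      refine Cardinal.mk_image_le.trans_lt ?_
      rw [Cardinal.mk_Iio_ordinal, Cardinal.lift_lt]
      exact Cardinal.lt_ord.1 hγ
    refine ⟨sSup (f '' Set.Iio γ), Ordinal.sSup_lt_of_lt_cof hcard ?_, fun α hα => ?_⟩
    · rintro _ ⟨α, hα, rfl⟩
      exact hf α hα
    · exact le_csSup Ordinal.bddAbove_of_small ⟨α, hα, rfl⟩
  two_mul_add_one_lt δ hδ := by
    have h2 : (2 : Ordinal) < l.ord := by
      rw [Cardinal.lt_ord]
      simpa using (Cardinal.natCast_lt_aleph0 (n := 2)).trans_le hl.aleph0_le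
    exact (Cardinal.isSuccLimit_ord hl.aleph0_le).add_one_lt
      (Ordinal.isPrincipal_mul_ord hl.aleph0_le h2 hδ)

namespace IsGameLength

variable {o v : Ordinal.{u}}

theorem pos (ho : IsGameLength o) : 0 < o := ho.isSuccLimit.bot_lt

theorem add_one_lt (ho : IsGameLength o) {α : Ordinal.{u}} (hα : α < o) : α + 1 < o :=
  ho.isSuccLimit.add_one_lt hα

theorem len_lt (ho : IsGameLength o) (s : SeqLT o v) : s.len < o :=
  SeqLT.len_lt_of_isSuccLimit ho.isSuccLimit s

end IsGameLength

section Runs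

variable {o : Ordinal.{u}}

def StrictChain (p : Play o 2) (γ : Ordinal.{u}) : Prop :=
  ∀ α β, α < β → β < γ → (p α).slt (p β)

theorem StrictChain.le {p : Play o 2} {γ α β : Ordinal.{u}} (h : StrictChain p γ) (hαβ : α ≤ β)
    (hβ : β < γ) : (p α).le (p β) :=
  hαβ.lt_or_eq.elim (fun hlt => (h α β hlt hβ).1) fun heq => heq ▸ SeqLT.le_refl _

theorem StrictChain.self_le_len {p : Play o 2} {γ : Ordinal.{u}} (h : StrictChain p γ) :
    ∀ α < γ, α ≤ (p α).len := by
  intro α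
  induction α using WellFoundedLT.induction with
  | _ α ih =>
    intro hα
    rcases Ordinal.zero_or_succ_or_isSuccLimit α with rfl | ⟨δ, rfl⟩ | hlim
    · exact zero_le
    · have hδ := Order.lt_succ δ
      exact Order.succ_le_of_lt ((ih δ hδ (hδ.trans hα)).trans_lt (h δ _ hδ hα).2)
    · exact (hlim.le_iff_forall_le).2 fun δ hδ =>
        ((ih δ hδ (hδ.trans hα)).trans_lt (h δ α hδ hα).2).le

open scoped Classical in
def chainLim (p : Play o 2) (γ : Ordinal.{u}) : SeqFull o 2 where
  val β := if h : β < o ∧ ∃ α < γ, β < (p α).len then (p h.2.choose).val β else 0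
  val_lt β _ := by
    split_ifs with h
    · exact (p _).val_lt β h.2.choose_spec.2
    · exact two_pos
  val_zero β hβ := dif_neg fun h => hβ.not_gt h.1

theorem prefixOf_chainLim (ho : IsGameLength o) {p : Play o 2} {γ α : Ordinal.{u}}
    (hp : StrictChain p γ) (hα : α < γ) : (p α).prefixOf (chainLim p γ) := by
  classical
  intro β hβ
  have h : β < o ∧ ∃ α < γ, β < (p α).len := ⟨hβ.trans (ho.len_lt _), α, hα, hβ⟩
  have hα' := h.2.choose_spec
  change _ = dite _ _ _
  rw [dif_pos h]
  rcases le_total α h.2.choose with hle | hle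
  · exact (hp.le hle hα'.1).2 β hβ
  · exact ((hp.le hle hα).2 β hα'.2).symm

theorem SeqLT.exists_prefixOf (ho : IsGameLength o) (s : SeqLT o 2) : ∃ x, s.prefixOf x :=
  ⟨chainLim (fun _ => s) 1, prefixOf_chainLim ho (p := fun _ => s) (fun _ _ hαβ hβ => absurd
    (hαβ.trans_eq (Order.lt_one_iff.1 hβ)) not_lt_zero) one_pos⟩

theorem StrictChain.exists_upper_bound (ho : IsGameLength o) {p : Play o 2} {γ : Ordinal.{u}}
    (hp : StrictChain p γ) (hγ : γ < o) : ∃ b : SeqLT o 2, ∀ α < γ, (p α).le b := by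
  obtain ⟨ℓ, hℓ, hbound⟩ := ho.exists_bound γ hγ (fun α => (p α).len) fun α _ => ho.len_lt _
  exact ⟨(chainLim p γ).res ℓ, fun α hα =>
    SeqFull.le_res (prefixOf_chainLim ho hp hα) hℓ (hbound α hα)⟩

theorem IsOutcome.eq {p : Play o 2} {x y : SeqFull o 2} (hx : IsOutcome p x)
    (hy : IsOutcome p y) : x = y :=
  SeqFull.ext fun β hβ => by
    obtain ⟨α, hα, hβα⟩ := hx.2 β hβ
    rw [← hx.1 α hα β hβα, ← hy.1 α hα β hβα]

theorem isOutcome_of_prefixOf (ho : IsGameLength o) {p : Play o 2} {x : SeqFull o 2}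
    (hp : StrictChain p o) (hx : ∀ α < o, (p α).prefixOf x) : IsOutcome p x :=
  ⟨hx, fun β hβ => ⟨β + 1, ho.add_one_lt hβ,
    (lt_add_one β).trans_le (hp.self_le_len _ (ho.add_one_lt hβ))⟩⟩

theorem isOutcome_chainLim (ho : IsGameLength o) {p : Play o 2} (hp : StrictChain p o) :
    IsOutcome p (chainLim p o) :=
  isOutcome_of_prefixOf ho hp fun _ hα => prefixOf_chainLim ho hp hα

theorem IsOutcome.mem_treeBody {p : Play o 2} {x : SeqFull o 2}
    {T : Set (SeqLT o 2)} (hx : IsOutcome p x) (hT : IsSubtree T) (hp : StrictChain p o)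
    (hpT : ∀ α < o, p α ∈ T) : x ∈ treeBody T :=
  fun α hα => hT _ (hpT α hα) _ (SeqFull.res_le (hx.1 α hα) hα (hp.self_le_len α hα))

variable {v : Ordinal.{u}} {p q : Play o v} {γ γ' α : Ordinal.{u}}

theorem resPlay_of_lt (hα : α < γ) : resPlay p γ α = p α := if_pos hα

theorem resPlay_of_le (hα : γ ≤ α) : resPlay p γ α = SeqLT.empty o v := if_neg hα.not_gt

theorem resPlay_resPlay (h : γ ≤ γ') : resPlay (resPlay p γ') γ = resPlay p γ := by
  funext α
  rcases lt_or_ge α γ with hα | hα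
  · rw [resPlay_of_lt hα, resPlay_of_lt hα, resPlay_of_lt (hα.trans_le h)]
  · rw [resPlay_of_le hα, resPlay_of_le hα]

theorem resPlay_congr (h : ∀ α < γ, p α = q α) : resPlay p γ = resPlay q γ := by
  funext α
  rcases lt_or_ge α γ with hα | hα
  · rw [resPlay_of_lt hα, resPlay_of_lt hα, h α hα]
  · rw [resPlay_of_le hα, resPlay_of_le hα]

open scoped Classical in
def mkRun (f g : Strat o v) : Play o v :=
  wellFounded_lt.fix fun γ ih =>
    let p : Play o v := fun β => if hβ : β < γ then ih β hβ else SeqLT.empty o v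
    if EvenOrd γ then f γ p else g γ p

theorem mkRun_of_evenOrd {f g : Strat o v} (hγ : EvenOrd γ) :
    mkRun f g γ = f γ (resPlay (mkRun f g) γ) := by
  rw [mkRun, WellFounded.fix_eq, if_pos hγ]
  rfl

theorem mkRun_of_oddOrd {f g : Strat o v} (hγ : OddOrd γ) :
    mkRun f g γ = g γ (resPlay (mkRun f g) γ) := by
  rw [mkRun, WellFounded.fix_eq, if_neg fun h => h.not_oddOrd hγ]
  rfl

end Runs

section LegalRuns

variable {o : Ordinal.{u}} {t : SeqLT o 2}

theorem isPosF_resPlay {q : Play o 2} {Γ : Ordinal.{u}}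
    (h : ∀ γ < Γ, (EvenOrd γ → MoveOK t (resPlay q γ) γ (q γ)) ∧
      (OddOrd γ → MoveOKFII (resPlay q γ) γ (q γ))) :
    IsPosF t (resPlay q Γ) Γ := by
  refine ⟨fun α γ hαγ hγ => ?_, fun h0 => ?_, fun α he hα => ?_, fun α hα => resPlay_of_le hα⟩
  · rw [resPlay_of_lt hγ, resPlay_of_lt (hαγ.trans hγ)]
    rcases evenOrd_or_oddOrd γ with he | hodd
    · simpa only [resPlay_of_lt hαγ] using ((h γ hγ).1 he).1 α hαγ
    · simpa only [resPlay_of_lt hαγ] using ((h γ hγ).2 hodd).1 α hαγ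
  · rw [resPlay_of_lt h0]
    exact ((h 0 h0).1 evenOrd_zero).2 rfl
  · rw [resPlay_of_lt hα, resPlay_of_lt ((lt_add_one α).trans hα)]
    simpa only [resPlay_of_lt (lt_add_one α)] using ((h _ hα).2 he.add_one).2 α rfl

theorem IsPosF.resPlay {p : Play o 2} {γ γ' : Ordinal.{u}} (h : IsPosF t p γ) (hγ' : γ' ≤ γ) :
    IsPosF t (resPlay p γ') γ' := by
  refine ⟨fun α β hαβ hβ => ?_, fun h0 => ?_, fun α he hα => ?_, fun α hα => resPlay_of_le hα⟩
  · rw [resPlay_of_lt hβ, resPlay_of_lt (hαβ.trans hβ)]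
    exact h.1 α β hαβ (hβ.trans_le hγ')
  · rw [resPlay_of_lt h0]
    exact h.2.1 (h0.trans_le hγ')
  · rw [resPlay_of_lt hα, resPlay_of_lt ((lt_add_one α).trans hα)]
    exact h.2.2.1 α he (hα.trans_le hγ')

def appendPlay (p : Play o 2) (γ : Ordinal.{u}) (m : SeqLT o 2) : Play o 2 :=
  fun α => if α < γ then p α else if α = γ then m else SeqLT.empty o 2

theorem appendPlay_of_lt {p : Play o 2} {γ α : Ordinal.{u}} {m : SeqLT o 2} (h : α < γ) :
    appendPlay p γ m α = p α :=
  if_pos h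

theorem appendPlay_self {p : Play o 2} {γ : Ordinal.{u}} {m : SeqLT o 2} :
    appendPlay p γ m γ = m := by
  rw [appendPlay, if_neg (lt_irrefl γ), if_pos rfl]

theorem appendPlay_resPlay {q : Play o 2} {γ : Ordinal.{u}} :
    appendPlay (resPlay q γ) γ (q γ) = resPlay q (γ + 1) := by
  funext α
  rcases lt_trichotomy α γ with h | rfl | h
  · rw [appendPlay_of_lt h, resPlay_of_lt h, resPlay_of_lt (h.trans (lt_add_one γ))]
  · rw [appendPlay_self, resPlay_of_lt (lt_add_one α)]
  · rw [appendPlay, if_neg h.not_gt, if_neg h.ne', resPlay_of_le (Order.add_one_le_of_lt h)]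

theorem IsPosF.append {p : Play o 2} {γ : Ordinal.{u}} {m : SeqLT o 2} (hp : IsPosF t p γ)
    (hγ : EvenOrd γ) (hm : MoveOK t p γ m) : IsPosF t (appendPlay p γ m) (γ + 1) := by
  refine ⟨fun α β hαβ hβ => ?_, fun _ => ?_, fun α he hα => ?_, fun α hα => ?_⟩
  · rcases (Order.lt_add_one_iff.1 hβ).lt_or_eq with hβγ | rfl
    · rw [appendPlay_of_lt hβγ, appendPlay_of_lt (hαβ.trans hβγ)]
      exact hp.1 α β hαβ hβγ
    · rw [appendPlay_self, appendPlay_of_lt hαβ]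
      exact hm.1 α hαβ
  · rcases eq_or_ne γ 0 with rfl | hγ0
    · rw [appendPlay_self]
      exact hm.2 rfl
    · rw [appendPlay_of_lt (pos_iff_ne_zero.2 hγ0)]
      exact hp.2.1 (pos_iff_ne_zero.2 hγ0)
  · rcases (Order.lt_add_one_iff.1 hα).lt_or_eq with hlt | heq
    · rw [appendPlay_of_lt hlt, appendPlay_of_lt ((lt_add_one α).trans hlt)]
      exact hp.2.2.1 α he hlt
    · exact absurd (heq ▸ he.add_one) hγ.not_oddOrd
  · rw [appendPlay, if_neg ((lt_add_one γ).trans_le hα).not_gt,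
      if_neg ((lt_add_one γ).trans_le hα).ne']

theorem isPosF_mkRun (f g : Strat o 2) {Γ : Ordinal.{u}} (hΓ : Γ ≤ o)
    (hf : ∀ γ < Γ, EvenOrd γ → IsPosF t (resPlay (mkRun f g) γ) γ →
      MoveOK t (resPlay (mkRun f g) γ) γ (f γ (resPlay (mkRun f g) γ)))
    (hg : LegalFII t g) : IsPosF t (resPlay (mkRun f g) Γ) Γ := by
  refine isPosF_resPlay fun γ hγ => ?_
  induction γ using WellFoundedLT.induction with
  | _ γ ih =>
    have hpos := isPosF_resPlay fun β hβ => ih β hβ (hβ.trans hγ)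
    refine ⟨fun he => ?_, fun hodd => ?_⟩
    · rw [mkRun_of_evenOrd he]
      exact hf γ hγ he hpos
    · rw [mkRun_of_oddOrd hodd]
      exact hg γ (hγ.trans_le hΓ) hodd _ hpos

theorem isPosF_mkRun_of_legal {f g : Strat o 2} (hf : LegalFI t f) (hg : LegalFII t g) :
    IsPosF t (resPlay (mkRun f g) o) o :=
  isPosF_mkRun f g le_rfl (fun γ hγ he hpos => hf γ hγ he _ hpos) hg

theorem followsI_mkRun (f g : Strat o 2) : FollowsI f (resPlay (mkRun f g) o) o :=
  fun α hα he => by rw [resPlay_of_lt hα, resPlay_resPlay hα.le, mkRun_of_evenOrd he]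

theorem followsII_mkRun (f g : Strat o 2) : FollowsII g (resPlay (mkRun f g) o) o :=
  fun α hα hodd => by rw [resPlay_of_lt hα, resPlay_resPlay hα.le, mkRun_of_oddOrd hodd]

/-- At the odd stage `δ + 1`, player II extends `p δ` by the bit `b δ (p δ)`. -/
def snocStrat (b : Ordinal.{u} → SeqLT o 2 → Ordinal.{u}) : Strat o 2 := fun γ p =>
  (p (Ordinal.pred γ)).snoc (b (Ordinal.pred γ) (p (Ordinal.pred γ)))

theorem legalFII_snocStrat (ho : IsGameLength o) {b : Ordinal.{u} → SeqLT o 2 → Ordinal.{u}}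
    (hb : ∀ δ s, b δ s < 2) : LegalFII t (snocStrat b) := by
  intro γ _ hodd p hp
  obtain ⟨δ, -, rfl⟩ := hodd.exists_eq_add_one
  have hsucc := SeqLT.isDirectSucc_snoc (s := p δ) ho.isSuccLimit (hb δ (p δ))
  simp only [snocStrat, Ordinal.pred_add_one]
  refine ⟨fun α hα => SeqLT.slt_of_le_of_slt ?_ hsucc.1, fun δ' hδ' => ?_⟩
  · exact StrictChain.le hp.1 (Order.lt_add_one_iff.1 hα) (lt_add_one δ)
  · obtain rfl : δ = δ' := by simpa using hδ'
    exact hsucc.2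

theorem mkRun_snocStrat {f : Strat o 2} {b : Ordinal.{u} → SeqLT o 2 → Ordinal.{u}}
    {δ : Ordinal.{u}} (hδ : EvenOrd δ) :
    mkRun f (snocStrat b) (δ + 1) =
      (mkRun f (snocStrat b) δ).snoc (b δ (mkRun f (snocStrat b) δ)) := by
  rw [mkRun_of_oddOrd hδ.add_one, snocStrat, Ordinal.pred_add_one, resPlay_of_lt (lt_add_one δ)]

end LegalRuns

theorem exists_subset_image_Iio_ord {α : Type (u + 1)} [Nonempty α] {l : Cardinal.{u}}
    {S : Set α} (hS : Cardinal.mk S ≤ Cardinal.lift.{u + 1} l) :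
    ∃ e : Ordinal.{u} → α, S ⊆ e '' Set.Iio l.ord := by
  rw [← Cardinal.card_ord l, ← Cardinal.mk_Iio_ordinal] at hS
  obtain ⟨f⟩ := Cardinal.le_def _ _ |>.1 hS
  have hf : Function.Injective fun y : S => (f y : Ordinal.{u}) :=
    Subtype.val_injective.comp f.injective
  exact ⟨Function.extend (fun y : S => (f y : Ordinal.{u})) Subtype.val
    fun _ => Classical.arbitrary α, fun y hy => ⟨f ⟨y, hy⟩, (f ⟨y, hy⟩).2, hf.extend_apply _ _ _⟩⟩

section SmallSets

variable {o : Ordinal.{u}} {t : SeqLT o 2} {A : Set (SeqFull o 2)}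

/-- At stage `2ε + 1` player II moves off `e ε`. -/
def diagonalStrat (e : Ordinal.{u} → SeqFull o 2) : Strat o 2 :=
  snocStrat fun δ s => 1 - (e (δ / 2)).val s.len

theorem winFIIStrat_of_subset_image (ho : IsGameLength o) (e : Ordinal.{u} → SeqFull o 2)
    (he : A ∩ basicOpen t ⊆ e '' Set.Iio o) : WinFIIStrat t A := by
  refine ⟨diagonalStrat e, legalFII_snocStrat ho fun _ _ => Ordinal.one_sub_lt_two _,
    fun p hp hfol => ⟨chainLim p o, isOutcome_chainLim ho hp.1, fun hxA => ?_⟩⟩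
  set x := chainLim p o
  have hx : IsOutcome p x := isOutcome_chainLim ho hp.1
  obtain ⟨ε, hε, hεx⟩ := he ⟨hxA, SeqLT.prefixOf.of_le (hp.2.1 ho.pos) (hx.1 0 ho.pos)⟩
  have hδ : 2 * ε + 1 < o := ho.two_mul_add_one_lt ε hε
  set c := (p (2 * ε)).len
  have hmove : p (2 * ε + 1) = (p (2 * ε)).snoc (1 - x.val c) := by
    rw [hfol _ hδ ⟨ε, rfl⟩, diagonalStrat, snocStrat, Ordinal.pred_add_one,
      Ordinal.mul_div_cancel _ two_ne_zero, resPlay_of_lt (lt_add_one _), hεx]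
  have hbit := hx.1 _ hδ c
  rw [hmove, SeqLT.snoc_len ho.isSuccLimit (Ordinal.one_sub_lt_two _),
    SeqLT.snoc_val_len ho.isSuccLimit (Ordinal.one_sub_lt_two _)] at hbit
  exact Ordinal.one_sub_ne_self (x.val_lt c (ho.len_lt _)) (hbit (lt_add_one c))

end SmallSets

section PerfectTrees

variable {o : Ordinal.{u}} {t : SeqLT o 2} {T : Set (SeqLT o 2)}

theorem IsPerfectTree.exists_splitting_slt (ho : IsGameLength o) (hT : IsPerfectTree T)
    {s : SeqLT o 2} (hs : s ∈ T) : ∃ w ∈ T, s.slt w ∧ ∀ b < 2, w.snoc b ∈ T := by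
  obtain ⟨t', -, hst', t₁, ht₁, -, -, hsucc₁, -, -⟩ := hT.2.2.2 s hs
  obtain ⟨w, hw, ht₁w, w₁, hw₁, w₂, hw₂, hsucc₁', hsucc₂', hne⟩ := hT.2.2.2 t₁ ht₁
  have hbit : ∀ {m}, IsDirectSucc w m → m.val w.len < 2 := fun h =>
    SeqLT.val_lt _ _ (h.2 ▸ lt_add_one _)
  refine ⟨w, hw, SeqLT.slt_of_slt_of_le (SeqLT.slt_of_le_of_slt hst' hsucc₁.1) ht₁w,
    fun b hb => ?_⟩
  rw [hsucc₁'.eq_snoc ho.isSuccLimit] at hw₁ hne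
  rw [hsucc₂'.eq_snoc ho.isSuccLimit] at hw₂ hne
  rcases Ordinal.eq_or_eq_of_lt_two hb (hbit hsucc₁') (hbit hsucc₂')
    fun h => hne (congrArg w.snoc h) with rfl | rfl
  exacts [hw₁, hw₂]

def IsTreeMove (t : SeqLT o 2) (T : Set (SeqLT o 2)) (p : Play o 2) (γ : Ordinal.{u})
    (m : SeqLT o 2) : Prop :=
  MoveOK t p γ m ∧ ((∀ α < γ, p α ∈ T) → m ∈ T ∧ ∀ b < 2, m.snoc b ∈ T)

theorem exists_isTreeMove (ho : IsGameLength o) (hT : IsPerfectTree T)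
    (hbase : ∃ m₀ ∈ T, t.le m₀) {p : Play o 2} {γ : Ordinal.{u}} (hγ : γ < o)
    (hp : StrictChain p γ) : ∃ m, IsTreeMove t T p γ m := by
  by_cases hall : ∀ α < γ, p α ∈ T
  · obtain ⟨b, hbT, hbt, hb⟩ : ∃ b ∈ T, (γ = 0 → t.le b) ∧ ∀ α < γ, (p α).le b := by
      rcases eq_or_ne γ 0 with rfl | hγ0
      · obtain ⟨m₀, hm₀, htm₀⟩ := hbase
        exact ⟨m₀, hm₀, fun _ => htm₀, fun α hα => absurd hα not_lt_zero⟩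
      · obtain ⟨b, hbT, hb⟩ := hT.2.2.1 γ hγ p hp hall
        exact ⟨b, hbT, fun h => absurd h hγ0, hb⟩
    obtain ⟨w, hwT, hbw, hsplit⟩ := hT.exists_splitting_slt ho hbT
    exact ⟨w, ⟨fun α hα => SeqLT.slt_of_le_of_slt (hb α hα) hbw,
      fun h0 => SeqLT.le_trans (hbt h0) hbw.1⟩, fun _ => ⟨hwT, hsplit⟩⟩
  · have hγ0 : γ ≠ 0 := by
      rintro rfl
      exact hall fun α hα => absurd hα not_lt_zero
    obtain ⟨b, hb⟩ := hp.exists_upper_bound ho hγ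
    have hsucc := SeqLT.isDirectSucc_snoc (s := b) ho.isSuccLimit two_pos
    exact ⟨b.snoc 0, ⟨fun α hα => SeqLT.slt_of_le_of_slt (hb α hα) hsucc.1,
      fun h0 => absurd h0 hγ0⟩, fun h => absurd h hall⟩

def treeStrat (t : SeqLT o 2) (T : Set (SeqLT o 2)) : Strat o 2 := fun γ p =>
  Classical.epsilon (IsTreeMove t T p γ)

theorem isTreeMove_treeStrat (ho : IsGameLength o) (hT : IsPerfectTree T)
    (hbase : ∃ m₀ ∈ T, t.le m₀) {p : Play o 2} {γ : Ordinal.{u}} (hγ : γ < o)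
    (hp : StrictChain p γ) : IsTreeMove t T p γ (treeStrat t T γ p) :=
  Classical.epsilon_spec (exists_isTreeMove ho hT hbase hγ hp)

theorem legalFI_treeStrat (ho : IsGameLength o) (hT : IsPerfectTree T)
    (hbase : ∃ m₀ ∈ T, t.le m₀) : LegalFI t (treeStrat t T) :=
  fun _ hγ _ _ hp => (isTreeMove_treeStrat ho hT hbase hγ hp.1).1

theorem chainLim_mem_treeBody_of_followsI (ho : IsGameLength o) (hT : IsPerfectTree T)
    (hbase : ∃ m₀ ∈ T, t.le m₀) {p : Play o 2} (hp : IsPosF t p o)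
    (hfol : FollowsI (treeStrat t T) p o) : chainLim p o ∈ treeBody T := by
  suffices h : ∀ γ < o, p γ ∈ T ∧ (EvenOrd γ → ∀ b < 2, (p γ).snoc b ∈ T) from
    (isOutcome_chainLim ho hp.1).mem_treeBody hT.2.1 hp.1 fun γ hγ => (h γ hγ).1
  intro γ
  induction γ using WellFoundedLT.induction with
  | _ γ ih =>
    intro hγ
    rcases evenOrd_or_oddOrd γ with he | hodd
    · have hall : ∀ α < γ, resPlay p γ α ∈ T := fun α hα => by
        rw [resPlay_of_lt hα]
        exact (ih α hα (hα.trans hγ)).1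
      obtain ⟨hmem, hsplit⟩ := (isTreeMove_treeStrat ho hT hbase hγ (hp.resPlay hγ.le).1).2 hall
      rw [hfol γ hγ he]
      exact ⟨hmem, fun _ => hsplit⟩
    · obtain ⟨δ, he, rfl⟩ := hodd.exists_eq_add_one
      have hsucc : IsDirectSucc (p δ) (p (δ + 1)) :=
        ⟨hp.1 δ _ (lt_add_one δ) hγ, hp.2.2.1 δ he hγ⟩
      rw [hsucc.eq_snoc ho.isSuccLimit]
      exact ⟨(ih δ (lt_add_one δ) ((lt_add_one δ).trans hγ)).2 he _
        (SeqLT.val_lt _ _ (hsucc.2 ▸ lt_add_one _)), fun he' => absurd hodd he'.not_oddOrd⟩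

theorem IsPerfectTree.exists_mem_le (ho : IsGameLength o) (hT : IsPerfectTree T)
    (hbody : treeBody T ⊆ basicOpen t) : ∃ m ∈ T, t.le m := by
  obtain ⟨s, hs⟩ := hT.1
  have hbase : ∃ m₀ ∈ T, s.le m₀ := ⟨s, hs, SeqLT.le_refl s⟩
  have hx := chainLim_mem_treeBody_of_followsI ho hT hbase
    (isPosF_mkRun_of_legal (legalFI_treeStrat ho hT hbase)
      (legalFII_snocStrat (b := fun _ _ => 0) ho fun _ _ => two_pos)) (followsI_mkRun _ _)
  exact ⟨_, hx t.len (ho.len_lt t), SeqFull.le_res (hbody hx) (ho.len_lt t) le_rfl⟩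

theorem winFIStrat_of_isPerfectTree {A : Set (SeqFull o 2)} (ho : IsGameLength o)
    (hT : IsPerfectTree T) (hbody : treeBody T ⊆ A ∩ basicOpen t) : WinFIStrat t A := by
  have hbase := hT.exists_mem_le ho fun _ hx => (hbody hx).2
  exact ⟨treeStrat t T, legalFI_treeStrat ho hT hbase, fun p hp hfol =>
    ⟨chainLim p o, isOutcome_chainLim ho hp.1,
      (hbody (chainLim_mem_treeBody_of_followsI ho hT hbase hp hfol)).1⟩⟩

end PerfectTrees

section StrategyTree

variable {o : Ordinal.{u}} {t : SeqLT o 2} {σ : Strat o 2} {x x' : SeqFull o 2}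

def bitRun (σ : Strat o 2) (x : SeqFull o 2) : Play o 2 :=
  mkRun σ (snocStrat fun _ s => x.val s.len)

theorem bitRun_add_one {δ : Ordinal.{u}} (he : EvenOrd δ) :
    bitRun σ x (δ + 1) = (bitRun σ x δ).snoc (x.val (bitRun σ x δ).len) :=
  mkRun_snocStrat he

theorem bitRun_of_evenOrd {γ : Ordinal.{u}} (he : EvenOrd γ) :
    bitRun σ x γ = σ γ (resPlay (bitRun σ x) γ) :=
  mkRun_of_evenOrd he

theorem isPosF_bitRun (ho : IsGameLength o) (hσ : LegalFI t σ) (x : SeqFull o 2) :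
    IsPosF t (resPlay (bitRun σ x) o) o :=
  isPosF_mkRun_of_legal hσ (legalFII_snocStrat ho fun _ s => x.val_lt _ (ho.len_lt s))

theorem strictChain_bitRun (ho : IsGameLength o) (hσ : LegalFI t σ) (x : SeqFull o 2) :
    StrictChain (bitRun σ x) o := fun α β hαβ hβ => by
  simpa only [resPlay_of_lt hβ, resPlay_of_lt (hαβ.trans hβ)] using
    (isPosF_bitRun ho hσ x).1 α β hαβ hβ

theorem bitRun_val_len (ho : IsGameLength o) (hσ : LegalFI t σ) {δ Γ : Ordinal.{u}}
    (he : EvenOrd δ) (hδΓ : δ < Γ) (hΓ : Γ < o) :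
    (bitRun σ x Γ).val (bitRun σ x δ).len = x.val (bitRun σ x δ).len := by
  have hb := x.val_lt _ (ho.len_lt (bitRun σ x δ))
  have hle := (strictChain_bitRun ho hσ x).le (Order.add_one_le_of_lt hδΓ) hΓ
  rw [bitRun_add_one he] at hle
  rw [← hle.2 _ (by rw [SeqLT.snoc_len ho.isSuccLimit hb]; exact lt_add_one _),
    SeqLT.snoc_val_len ho.isSuccLimit hb]

theorem bitRun_congr {Γ : Ordinal.{u}} (h : ∀ δ, EvenOrd δ → δ < Γ →
    x'.val (bitRun σ x δ).len = x.val (bitRun σ x δ).len) :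
    ∀ β ≤ Γ, bitRun σ x' β = bitRun σ x β := by
  intro β
  induction β using WellFoundedLT.induction with
  | _ β ih =>
    intro hβ
    rcases evenOrd_or_oddOrd β with he | hodd
    · rw [bitRun_of_evenOrd he, bitRun_of_evenOrd he,
        resPlay_congr fun α hα => ih α hα (hα.le.trans hβ)]
    · obtain ⟨δ, he, rfl⟩ := hodd.exists_eq_add_one
      have hδ := lt_add_one δ
      rw [bitRun_add_one he, bitRun_add_one he, ih δ hδ (hδ.le.trans hβ),
        h δ he (hδ.trans_le hβ)]

theorem bitRun_congr_of_le (ho : IsGameLength o) (hσ : LegalFI t σ) {s : SeqLT o 2}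
    {Γ : Ordinal.{u}} (hΓ : Γ < o) (hs : s.le (bitRun σ x Γ))
    (hread : ∀ δ < Γ, (bitRun σ x δ).len < s.len) (hx' : s.prefixOf x') :
    ∀ β ≤ Γ, bitRun σ x' β = bitRun σ x β :=
  bitRun_congr fun δ he hδ => by
    rw [← hx' _ (hread δ hδ), hs.2 _ (hread δ hδ), bitRun_val_len ho hσ he hδ hΓ]

theorem le_bitRun_len (ho : IsGameLength o) (hσ : LegalFI t σ) {s : SeqLT o 2}
    {Γ : Ordinal.{u}} (hΓ : Γ < o) (hs : s.le (bitRun σ x Γ)) (hx' : s.prefixOf x') :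
    s.le (bitRun σ x' s.len) := by
  -- Up to the first stage `sInf S` at which the run copying `x` reaches the length of `s`,
  -- it reads only bits inside `s`, which `x'` shares.
  set S := {β | s.len ≤ (bitRun σ x β).len}
  have hΓS : Γ ∈ S := hs.1
  have hΓ₀ : sInf S ≤ Γ := csInf_le' hΓS
  have hΓ₀o : sInf S < o := hΓ₀.trans_lt hΓ
  have hs₀ : s.le (bitRun σ x (sInf S)) :=
    SeqLT.le_of_le_of_le hs ((strictChain_bitRun ho hσ x).le hΓ₀ hΓ) (csInf_mem ⟨Γ, hΓS⟩)
  have hread : ∀ δ < sInf S, (bitRun σ x δ).len < s.len := fun δ hδ =>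
    lt_of_not_ge fun h => (csInf_le' (show δ ∈ S from h)).not_gt hδ
  rw [← bitRun_congr_of_le ho hσ hΓ₀o hs₀ hread hx' _ le_rfl] at hs₀
  have hlen : sInf S ≤ s.len :=
    csInf_le' ((strictChain_bitRun ho hσ x).self_le_len _ (ho.len_lt s))
  exact SeqLT.le_trans hs₀ ((strictChain_bitRun ho hσ x').le hlen (ho.len_lt s))

def strategyTree (σ : Strat o 2) : Set (SeqLT o 2) :=
  {s | ∃ x : SeqFull o 2, ∃ γ < o, s.le (bitRun σ x γ)}

theorem snoc_mem_strategyTree (ho : IsGameLength o) (hσ : LegalFI t σ) {δ b : Ordinal.{u}}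
    (hδ : δ < o) (he : EvenOrd δ) (hb : b < 2) :
    (bitRun σ x δ).snoc b ∈ strategyTree σ := by
  set w := bitRun σ x δ
  have hsucc := SeqLT.isDirectSucc_snoc (s := w) ho.isSuccLimit hb
  obtain ⟨y, hy⟩ := (w.snoc b).exists_prefixOf ho
  have hrun := bitRun_congr_of_le ho hσ hδ (SeqLT.le_refl w)
    (fun δ' hδ' => ((strictChain_bitRun ho hσ x) δ' δ hδ' hδ).2)
    (SeqLT.prefixOf.of_le hsucc.1.1 hy) δ le_rfl
  have hbit : y.val w.len = b := by
    rw [← hy _ hsucc.1.2, SeqLT.snoc_val_len ho.isSuccLimit hb]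
  refine ⟨y, δ + 1, ho.add_one_lt hδ, ?_⟩
  rw [bitRun_add_one he, hrun, hbit]
  exact SeqLT.le_refl _

theorem isPerfectTree_strategyTree (ho : IsGameLength o) (hσ : LegalFI t σ) :
    IsPerfectTree (strategyTree σ) := by
  refine ⟨⟨_, default, 0, ho.pos, SeqLT.le_refl _⟩, fun s ⟨x, γ, hγ, hs⟩ r hr =>
    ⟨x, γ, hγ, SeqLT.le_trans hr hs⟩, fun γ hγ s hchain hmem => ?_, fun s hs => ?_⟩
  · obtain ⟨b, hb⟩ := StrictChain.exists_upper_bound ho hchain hγ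
    obtain ⟨x, hx⟩ := b.exists_prefixOf ho
    refine ⟨_, ⟨x, b.len, ho.len_lt b, SeqLT.le_refl _⟩, fun α hα => ?_⟩
    obtain ⟨y, β, hβ, hle⟩ := hmem α hα
    exact SeqLT.le_trans (le_bitRun_len ho hσ hβ hle (SeqLT.prefixOf.of_le (hb α hα) hx))
      ((strictChain_bitRun ho hσ x).le (hb α hα).1 (ho.len_lt b))
  · obtain ⟨x, γ, hγ, hs⟩ := hs
    obtain ⟨δ, hγδ, hδ, he⟩ : ∃ δ, γ ≤ δ ∧ δ < o ∧ EvenOrd δ := by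
      rcases evenOrd_or_oddOrd γ with he | hodd
      · exact ⟨γ, le_rfl, hγ, he⟩
      · exact ⟨γ + 1, (lt_add_one γ).le, ho.add_one_lt hγ, hodd.add_one⟩
    have hsucc : ∀ b < 2, IsDirectSucc (bitRun σ x δ) ((bitRun σ x δ).snoc b) :=
      fun _ hb => SeqLT.isDirectSucc_snoc ho.isSuccLimit hb
    refine ⟨bitRun σ x δ, ⟨x, δ, hδ, SeqLT.le_refl _⟩,
      SeqLT.le_trans hs ((strictChain_bitRun ho hσ x).le hγδ hδ),
      _, snoc_mem_strategyTree ho hσ hδ he two_pos,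
      _, snoc_mem_strategyTree ho hσ hδ he one_lt_two,
      hsucc 0 two_pos, hsucc 1 one_lt_two, fun h => zero_ne_one (α := Ordinal.{u}) ?_⟩
    rw [← SeqLT.snoc_val_len (s := bitRun σ x δ) ho.isSuccLimit two_pos, h,
      SeqLT.snoc_val_len ho.isSuccLimit one_lt_two]

theorem treeBody_strategyTree_subset {A : Set (SeqFull o 2)} (ho : IsGameLength o)
    (hσ : LegalFI t σ)
    (hwin : ∀ p : Play o 2, IsPosF t p o → FollowsI σ p o → ∃ x, IsOutcome p x ∧ x ∈ A) :
    treeBody (strategyTree σ) ⊆ A ∩ basicOpen t := by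
  intro y hy
  have hchain := strictChain_bitRun ho hσ y
  -- Every node `y ↾ α` of the tree already lies on the run copying `y` itself.
  have hres : ∀ α < o, (y.res α).le (bitRun σ y α) := fun α hα => by
    obtain ⟨x, γ, hγ, hle⟩ := hy α hα
    simpa only [SeqFull.res_len hα] using le_bitRun_len ho hσ hγ hle (y.res_prefixOf α)
  have hprefix : ∀ γ < o, (bitRun σ y γ).prefixOf y := fun γ hγ => by
    have hα := ho.len_lt (bitRun σ y γ)
    rw [← SeqLT.eq_of_le_of_le (hres _ hα) (hchain.le (hchain.self_le_len γ hγ) hα)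
      (SeqFull.res_len hα)]
    exact y.res_prefixOf _
  have hpos := isPosF_bitRun ho hσ y
  have hout : IsOutcome (resPlay (bitRun σ y) o) y :=
    isOutcome_of_prefixOf ho hpos.1 fun γ hγ => by
      rw [resPlay_of_lt hγ]
      exact hprefix γ hγ
  obtain ⟨z, hz, hzA⟩ := hwin _ hpos (followsI_mkRun _ _)
  refine ⟨hz.eq hout ▸ hzA, SeqLT.prefixOf.of_le (hpos.2.1 ho.pos) (hout.1 0 ho.pos)⟩

theorem winFIStrat_iff_exists_isPerfectTree {A : Set (SeqFull o 2)} (ho : IsGameLength o) :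
    WinFIStrat t A ↔ ∃ T : Set (SeqLT o 2), IsPerfectTree T ∧ treeBody T ⊆ A ∩ basicOpen t :=
  ⟨fun ⟨σ, hσ, hwin⟩ => ⟨strategyTree σ, isPerfectTree_strategyTree ho hσ,
    treeBody_strategyTree_subset ho hσ hwin⟩,
    fun ⟨_, hT, hbody⟩ => winFIStrat_of_isPerfectTree ho hT hbody⟩

end StrategyTree

section Chase

variable {o : Ordinal.{u}} {t : SeqLT o 2} {σ : Strat o 2} {x x' : SeqFull o 2}

theorem LegalFII.isDirectSucc (hσ : LegalFII t σ) {p : Play o 2} {γ : Ordinal.{u}}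
    {m : SeqLT o 2} (hp : IsPosF t p γ) (he : EvenOrd γ) (hγ : γ + 1 < o)
    (hm : MoveOK t p γ m) : IsDirectSucc m (σ (γ + 1) (appendPlay p γ m)) := by
  have h := hσ (γ + 1) hγ he.add_one _ (hp.append he hm)
  have hslt := h.1 γ (lt_add_one γ)
  have hlen := h.2 γ rfl
  rw [appendPlay_self] at hslt hlen
  exact ⟨hslt, hlen⟩

def IsCandidate (t : SeqLT o 2) (σ : Strat o 2) (x : SeqFull o 2) (p : Play o 2)
    (γ β : Ordinal.{u}) : Prop :=
  β < o ∧ MoveOK t p γ (x.res β) ∧ (σ (γ + 1) (appendPlay p γ (x.res β))).prefixOf x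

theorem IsCandidate.congr (hσ : LegalFII t σ) {p : Play o 2} {γ β : Ordinal.{u}}
    (hp : IsPosF t p γ) (he : EvenOrd γ) (hγ : γ + 1 < o)
    (hagree : ∀ c ≤ β, x.val c = x'.val c) (h : IsCandidate t σ x p γ β) :
    IsCandidate t σ x' p γ β := by
  obtain ⟨hβ, hm, hr⟩ := h
  have hres : x.res β = x'.res β := SeqFull.res_congr fun c hc => hagree c hc.le
  rw [hres] at hm hr
  have hd := hσ.isDirectSucc hp he hγ hm
  rw [hd.prefixOf_iff (hres ▸ x.res_prefixOf β), SeqFull.res_len hβ] at hr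
  refine ⟨hβ, hm, (hd.prefixOf_iff (x'.res_prefixOf β)).2 ?_⟩
  rw [SeqFull.res_len hβ, hr, hagree β le_rfl]

-- Without a candidate, `sInf ∅ = 0` makes the move junk; the chase is used only before that.
def chaseStrat (t : SeqLT o 2) (σ : Strat o 2) (x : SeqFull o 2) : Strat o 2 := fun γ p =>
  x.res (sInf {β | IsCandidate t σ x p γ β})

def chaseRun (t : SeqLT o 2) (σ : Strat o 2) (x : SeqFull o 2) : Play o 2 :=
  mkRun (chaseStrat t σ x) σ

theorem chaseRun_of_evenOrd {γ : Ordinal.{u}} (he : EvenOrd γ) :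
    chaseRun t σ x γ = chaseStrat t σ x γ (resPlay (chaseRun t σ x) γ) :=
  mkRun_of_evenOrd he

theorem chaseRun_of_oddOrd {γ : Ordinal.{u}} (hodd : OddOrd γ) :
    chaseRun t σ x γ = σ γ (resPlay (chaseRun t σ x) γ) :=
  mkRun_of_oddOrd hodd

def IsStuck (t : SeqLT o 2) (σ : Strat o 2) (x : SeqFull o 2) (γ : Ordinal.{u}) : Prop :=
  EvenOrd γ ∧ γ < o ∧ ¬∃ β, IsCandidate t σ x (resPlay (chaseRun t σ x) γ) γ β

def IsFirstStuck (t : SeqLT o 2) (σ : Strat o 2) (x : SeqFull o 2) (Γ : Ordinal.{u}) : Prop :=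
  IsStuck t σ x Γ ∧ ∀ γ < Γ, ¬IsStuck t σ x γ

theorem chaseRun_of_not_isStuck {γ : Ordinal.{u}} (he : EvenOrd γ) (hγ : γ < o)
    (hns : ¬IsStuck t σ x γ) : ∃ B, chaseRun t σ x γ = x.res B ∧
      IsCandidate t σ x (resPlay (chaseRun t σ x) γ) γ B ∧
      ∀ β, IsCandidate t σ x (resPlay (chaseRun t σ x) γ) γ β → B ≤ β := by
  have hc : ∃ β, IsCandidate t σ x (resPlay (chaseRun t σ x) γ) γ β :=
    not_not.1 fun h => hns ⟨he, hγ, h⟩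
  exact ⟨_, mkRun_of_evenOrd he, csInf_mem hc, fun β hβ => csInf_le' hβ⟩

theorem chaseRun_legal {Γ : Ordinal.{u}} (hσ : LegalFII t σ) (hΓ : Γ ≤ o)
    (hns : ∀ γ < Γ, ¬IsStuck t σ x γ) :
    IsPosF t (resPlay (chaseRun t σ x) Γ) Γ ∧ ∀ β < Γ, (chaseRun t σ x β).prefixOf x := by
  refine ⟨isPosF_mkRun _ _ hΓ (fun γ hγ he _ => ?_) hσ, fun β hβ => ?_⟩
  · obtain ⟨B, hmove, hcand, -⟩ := chaseRun_of_not_isStuck he (hγ.trans_le hΓ) (hns γ hγ)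
    change MoveOK t _ γ (chaseStrat t σ x γ (resPlay (chaseRun t σ x) γ))
    rw [← chaseRun_of_evenOrd he, hmove]
    exact hcand.2.1
  rcases evenOrd_or_oddOrd β with he | hodd
  · obtain ⟨B, hmove, -⟩ := chaseRun_of_not_isStuck he (hβ.trans_le hΓ) (hns β hβ)
    exact hmove ▸ x.res_prefixOf B
  · obtain ⟨δ, he, rfl⟩ := hodd.exists_eq_add_one
    have hδ := (lt_add_one δ).trans hβ
    obtain ⟨B, hmove, hcand, -⟩ := chaseRun_of_not_isStuck he (hδ.trans_le hΓ) (hns δ hδ)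
    rw [chaseRun_of_oddOrd he.add_one, ← appendPlay_resPlay, hmove]
    exact hcand.2.2

theorem exists_isFirstStuck {A : Set (SeqFull o 2)} (ho : IsGameLength o) (hσ : LegalFII t σ)
    (hwin : ∀ p : Play o 2, IsPosF t p o → FollowsII σ p o → ∃ z, IsOutcome p z ∧ z ∉ A)
    (hx : x ∈ A) : ∃ Γ, IsFirstStuck t σ x Γ := by
  by_cases h : ∃ γ, IsStuck t σ x γ
  · obtain ⟨Γ, hΓ, hmin⟩ := WellFounded.has_min wellFounded_lt _ h
    exact ⟨Γ, hΓ, fun γ hγ hs => hmin γ hs hγ⟩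
  obtain ⟨hpos, hprefix⟩ := chaseRun_legal hσ le_rfl fun γ _ hs => h ⟨γ, hs⟩
  obtain ⟨z, hz, hzA⟩ := hwin _ hpos (followsII_mkRun _ _)
  have hout : IsOutcome (resPlay (chaseRun t σ x) o) x :=
    isOutcome_of_prefixOf ho hpos.1 fun γ hγ => (resPlay_of_lt hγ).symm ▸ hprefix γ hγ
  exact absurd (hz.eq hout ▸ hx) hzA

theorem chaseRun_congr (ho : IsGameLength o) (hσ : LegalFII t σ) {ℓ Γ : Ordinal.{u}}
    (hagree : ∀ c ≤ ℓ, x.val c = x'.val c) (hΓ : Γ ≤ o) (hns : ∀ γ < Γ, ¬IsStuck t σ x γ)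
    (hlen : ∀ β < Γ, (chaseRun t σ x β).len ≤ ℓ) :
    ∀ β < Γ, chaseRun t σ x' β = chaseRun t σ x β ∧ ¬IsStuck t σ x' β := by
  intro β
  induction β using WellFoundedLT.induction with
  | _ β ih =>
    intro hβ
    have hpos := (chaseRun_legal hσ (hβ.le.trans hΓ) fun γ hγ => hns γ (hγ.trans hβ)).1
    have hP : resPlay (chaseRun t σ x') β = resPlay (chaseRun t σ x) β :=
      resPlay_congr fun α hα => (ih α hα (hα.trans hβ)).1
    rcases evenOrd_or_oddOrd β with he | hodd
    · have hβ1 := ho.add_one_lt (hβ.trans_le hΓ)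
      obtain ⟨B, hmove, hcand, hmin⟩ := chaseRun_of_not_isStuck he (hβ.trans_le hΓ) (hns β hβ)
      have hBℓ : B ≤ ℓ := by
        simpa only [hmove, SeqFull.res_len hcand.1] using hlen β hβ
      have hcand' : IsCandidate t σ x' (resPlay (chaseRun t σ x') β) β B :=
        hP ▸ hcand.congr hσ hpos he hβ1 fun c hc => hagree c (hc.trans hBℓ)
      have hns' : ¬IsStuck t σ x' β := fun hs => hs.2.2 ⟨B, hcand'⟩
      -- Candidates of length `≤ ℓ` are the same for `x` and `x'`, so the least ones agree.
      obtain ⟨B', hmove', hcandB', hmin'⟩ := chaseRun_of_not_isStuck he (hβ.trans_le hΓ) hns'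
      have hB'B := hmin' B hcand'
      have hBB' := hmin B' ((hP ▸ hcandB').congr hσ hpos he hβ1 fun c hc =>
        (hagree c (hc.trans (hB'B.trans hBℓ))).symm)
      refine ⟨?_, hns'⟩
      rw [hmove', hmove, le_antisymm hB'B hBB']
      exact SeqFull.res_congr fun c hc => (hagree c (hc.le.trans hBℓ)).symm
    · refine ⟨?_, fun hs => hs.1.not_oddOrd hodd⟩
      rw [chaseRun_of_oddOrd hodd, chaseRun_of_oddOrd hodd, hP]

theorem exists_isCandidate_of_ne (ho : IsGameLength o) (hσ : LegalFII t σ) (hne : x ≠ x')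
    (hx : t.prefixOf x) (hx' : t.prefixOf x') {ℓ γ : Ordinal.{u}}
    (hagree : ∀ c ≤ ℓ, x.val c = x'.val c) {p : Play o 2} (hp : IsPosF t p γ)
    (he : EvenOrd γ) (hγ : γ < o) (hmoves : ∀ α < γ, (p α).prefixOf x ∧ (p α).len ≤ ℓ) :
    (∃ β, IsCandidate t σ x p γ β) ∨ ∃ β, IsCandidate t σ x' p γ β := by
  obtain ⟨α, hα, hbelow, hα_ne⟩ := SeqFull.exists_first_ne hne
  have hℓα : ℓ < α := lt_of_not_ge fun h => hα_ne (hagree α h)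
  have htα : t.len ≤ α := le_of_not_gt fun h => hα_ne ((hx α h).symm.trans (hx' α h))
  have hres : x.res α = x'.res α := SeqFull.res_congr hbelow
  have hm : MoveOK t p γ (x.res α) :=
    ⟨fun β hβ => ⟨SeqFull.le_res (hmoves β hβ).1 hα ((hmoves β hβ).2.trans hℓα.le),
      (SeqFull.res_len hα).symm ▸ (hmoves β hβ).2.trans_lt hℓα⟩,
      fun _ => SeqFull.le_res hx hα htα⟩
  have hd := hσ.isDirectSucc hp he (ho.add_one_lt hγ) hm
  have hr : (σ (γ + 1) (appendPlay p γ (x.res α))).val α < 2 :=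
    SeqLT.val_lt _ _ (by rw [hd.2, SeqFull.res_len hα]; exact lt_add_one α)
  rcases Ordinal.eq_or_eq_of_lt_two hr (x.val_lt α hα) (x'.val_lt α hα) hα_ne with h | h
  · refine Or.inl ⟨α, hα, hm, (hd.prefixOf_iff (x.res_prefixOf α)).2 ?_⟩
    rwa [SeqFull.res_len hα]
  · rw [hres] at hm hd h
    refine Or.inr ⟨α, hα, hm, (hd.prefixOf_iff (x'.res_prefixOf α)).2 ?_⟩
    rwa [SeqFull.res_len hα]

theorem eq_of_isFirstStuck (ho : IsGameLength o) (hσ : LegalFII t σ)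
    (hx : t.prefixOf x) (hx' : t.prefixOf x') {ℓ Γ Γ' : Ordinal.{u}}
    (hagree : ∀ c ≤ ℓ, x.val c = x'.val c) (hΓ : IsFirstStuck t σ x Γ)
    (hΓ' : IsFirstStuck t σ x' Γ') (hlen : ∀ β < Γ, (chaseRun t σ x β).len ≤ ℓ)
    (hlen' : ∀ β < Γ', (chaseRun t σ x' β).len ≤ ℓ) : x = x' := by
  have hrun := chaseRun_congr ho hσ hagree hΓ.1.2.1.le hΓ.2 hlen
  have hrun' := chaseRun_congr ho hσ (fun c hc => (hagree c hc).symm) hΓ'.1.2.1.le hΓ'.2 hlen'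
  obtain rfl : Γ = Γ' := le_antisymm (not_lt.1 fun h => (hrun Γ' h).2 hΓ'.1)
    (not_lt.1 fun h => (hrun' Γ h).2 hΓ.1)
  have hP : resPlay (chaseRun t σ x') Γ = resPlay (chaseRun t σ x) Γ :=
    resPlay_congr fun α hα => (hrun α hα).1
  obtain ⟨hpos, hprefix⟩ := chaseRun_legal hσ hΓ.1.2.1.le hΓ.2
  by_contra hne
  rcases exists_isCandidate_of_ne ho hσ hne hx hx' hagree hpos hΓ.1.1 hΓ.1.2.1
    (fun α hα => by simpa only [resPlay_of_lt hα] using ⟨hprefix α hα, hlen α hα⟩) with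
    hc | hc
  · exact hΓ.1.2.2 hc
  · exact hΓ'.1.2.2 (hP ▸ hc)

theorem mk_le_mk_seqLT_of_winFIIStrat {A : Set (SeqFull o 2)} (ho : IsGameLength o)
    (h : WinFIIStrat t A) : Cardinal.mk ↥(A ∩ basicOpen t) ≤ Cardinal.mk (SeqLT o 2) := by
  obtain ⟨σ, hσ, hwin⟩ := h
  choose Γ hΓ using fun y : ↥(A ∩ basicOpen t) => exists_isFirstStuck ho hσ hwin y.2.1
  choose ℓ hℓo hℓ using fun y => ho.exists_bound (Γ y) (hΓ y).1.2.1
    (fun β => (chaseRun t σ y β).len) fun _ _ => ho.len_lt _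
  refine Cardinal.mk_le_of_injective (f := fun y => (y : SeqFull o 2).res (ℓ y + 1))
    fun y y' h => Subtype.ext ?_
  have hℓy : ℓ y = ℓ y' := by
    simpa [SeqFull.res_len (ho.add_one_lt (hℓo _))] using congrArg SeqLT.len h
  dsimp only at h
  rw [← hℓy] at h
  exact eq_of_isFirstStuck ho hσ y.2.2 y'.2.2
    (fun c hc => SeqFull.val_eq_of_res_eq h (ho.add_one_lt (hℓo y)) (Order.lt_add_one_iff.2 hc))
    (hΓ y) (hΓ y') (hℓ y) (hℓy ▸ hℓ y')

end Chase

theorem mk_seqLT_ord_le {l : Cardinal.{u}} (hl : Cardinal.aleph0 ≤ l)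
    (hpow : Cardinal.powerlt l l = l) :
    Cardinal.mk (SeqLT l.ord 2) ≤ Cardinal.lift.{u + 1} l := by
  have hlim := Cardinal.isSuccLimit_ord hl
  let H : (Σ γ : Set.Iio l.ord, (Set.Iio γ.1 → Set.Iio (2 : Ordinal.{u}))) → SeqLT l.ord 2 :=
    fun z =>
      { len := z.1
        len_lt := lt_sup_of_lt_left z.1.2
        val := fun β => if h : β < z.1.1 then (z.2 ⟨β, h⟩).1 else 0
        val_lt := fun β hβ => by rw [dif_pos hβ]; exact (z.2 ⟨β, hβ⟩).2
        val_zero := fun β hβ => dif_neg hβ.not_gt }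
  have hH : Function.Surjective H := fun s =>
    ⟨⟨⟨s.len, SeqLT.len_lt_of_isSuccLimit hlim s⟩, fun c => ⟨s.val c, s.val_lt c c.2⟩⟩,
      SeqLT.ext rfl fun β hβ => dif_pos hβ⟩
  have hpow_le : ∀ γ : Set.Iio l.ord,
      Cardinal.mk (Set.Iio γ.1 → Set.Iio (2 : Ordinal.{u})) ≤ Cardinal.lift.{u + 1} l := by
    intro γ
    rw [Cardinal.mk_arrow, Cardinal.lift_id, Cardinal.lift_id, Cardinal.mk_Iio_ordinal,
      Cardinal.mk_Iio_ordinal, Ordinal.card_ofNat, Cardinal.lift_ofNat, ← Cardinal.lift_two_power,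
      Cardinal.lift_le]
    calc (2 : Cardinal.{u}) ^ γ.1.card ≤ l ^ γ.1.card :=
          Cardinal.power_le_power_right ((Cardinal.natCast_lt_aleph0 (n := 2)).le.trans hl)
      _ ≤ Cardinal.powerlt l l := Cardinal.le_powerlt l (Cardinal.lt_ord.1 γ.2)
      _ = l := hpow
  calc Cardinal.mk (SeqLT l.ord 2)
      ≤ Cardinal.sum fun γ : Set.Iio l.ord =>
          Cardinal.mk (Set.Iio γ.1 → Set.Iio (2 : Ordinal.{u})) := by
        simpa only [Cardinal.mk_sigma] using Cardinal.mk_le_of_surjective hH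
    _ ≤ Cardinal.sum fun _ : Set.Iio l.ord => Cardinal.lift.{u + 1} l :=
        Cardinal.sum_le_sum _ _ hpow_le
    _ = Cardinal.lift.{u + 1} l := by
      rw [Cardinal.sum_const', Cardinal.mk_Iio_ordinal, Cardinal.card_ord, ← Cardinal.lift_mul,
        Cardinal.mul_eq_self hl]

theorem statement19_general (l : Cardinal.{u}) (hreg : l.IsRegular)
    (hpow : Cardinal.powerlt l l = l)
    (A : Set (SeqFull l.ord 2)) (t : SeqLT l.ord 2) :
    (WinFIStrat t A ↔
      ∃ T : Set (SeqLT l.ord 2), IsPerfectTree T ∧ treeBody T ⊆ A ∩ basicOpen t) ∧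
    (WinFIIStrat t A ↔ Cardinal.mk ↥(A ∩ basicOpen t) ≤ Cardinal.lift.{u + 1} l) := by
  have ho := isGameLength_ord hreg
  refine ⟨winFIStrat_iff_exists_isPerfectTree ho, fun h => ?_, fun h => ?_⟩
  · exact (mk_le_mk_seqLT_of_winFIIStrat ho h).trans (mk_seqLT_ord_le hreg.aleph0_le hpow)
  · obtain ⟨e, he⟩ := exists_subset_image_Iio_ord h
    exact winFIIStrat_of_subset_image ho e he

/-- For an uncountable regular cardinal `λ` with `λ^{<λ} = λ`, `A ⊆ λ^2` and `t ∈ 2^{<λ}`: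
(1) player I has a winning strategy in the perfect set game `F^t_λ(A)` iff `A ∩ N_t` has a
perfect subset; (2) player II has a winning strategy in `F^t_λ(A)` iff `|A ∩ N_t| ≤ λ`. -/
theorem statement19 (l : Cardinal.{u}) (hreg : l.IsRegular) (hunc : Cardinal.aleph0 < l)
    (hpow : Cardinal.powerlt l l = l)
    (A : Set (SeqFull l.ord 2)) (t : SeqLT l.ord 2) :
    (WinFIStrat t A ↔
      ∃ T : Set (SeqLT l.ord 2), IsPerfectTree T ∧ treeBody T ⊆ A ∩ basicOpen t) ∧
    (WinFIIStrat t A ↔ Cardinal.mk ↥(A ∩ basicOpen t) ≤ Cardinal.lift.{u + 1} l) :=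
  statement19_general l hreg hpow A t

end
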